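/- Let (Z_i)_{i∈ℤ} be a strictly stationary sequence of ℝ^d-valued random vectors whose norm is regularly varying with index α > 0 and which is pairwise asymptotically independent, i.e. lim_{x→∞} P(‖Z_i‖ > x, ‖Z_j‖ > x)/P(‖Z_1‖ > x) = 0 for all i ≠ j. Let (a_n) be positive reals with lim_{n→∞} n·P(‖Z_1‖ > a_n) = 1, and let D be an almost surely finite nonnegative random variable independent of (Z_i). Then for every integer m ≥ 1 and every c > 0, lim_{n→∞} P( ∃ k ∈ {1,…,n} and ∃ l ∈ {k−m,…,k+m} \ {k} such that D·‖Z_k‖ > c·a_n and D·‖Z_l‖ > c·a_n ) = 0. -/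

import Mathlib

open MeasureTheory Filter

noncomputable section

/-- An `ℝ^d`-valued random vector has regularly varying (max-)norm with index `α > 0`. -/
def RegVaryingNorm {Ω : Type*} [MeasurableSpace Ω] (P : Measure Ω) {d : ℕ}
    (X : Ω → (Fin d → ℝ)) (α : ℝ) : Prop :=
  (∀ x : ℝ, 0 < x → 0 < (P {ω | x < ‖X ω‖}).toReal) ∧
  (∀ u : ℝ, 0 < u →
    Tendsto (fun x : ℝ => (P {ω | u * x < ‖X ω‖}).toReal / (P {ω | x < ‖X ω‖}).toReal)
      atTop (nhds (u ^ (-α))))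

/-- A sequence `(Z_i)_{i ∈ ℤ}` is strictly stationary. -/
def StrictlyStationary {Ω : Type*} [MeasurableSpace Ω] (P : Measure Ω) {E : Type*}
    [MeasurableSpace E] (Z : ℤ → Ω → E) : Prop :=
  ∀ (n : ℕ) (h : ℤ),
    Measure.map (fun ω => fun i : Fin n => Z (1 + (i : ℤ) + h) ω) P =
      Measure.map (fun ω => fun i : Fin n => Z (1 + (i : ℤ)) ω) P

/-!
Truncate `D`: off the event `{D > s}`, whose probability is small for large `s`, the two
exceedances `D‖Z_k‖ > c a_n` and `D‖Z_l‖ > c a_n` force `‖Z_k‖, ‖Z_l‖ > x_n := (c/s) a_n`.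
A union bound over the at most `2mn` pairs `(k, l)` together with stationarity bounds the
probability of the latter event by `2m ∑_{j ≤ m} n P(‖Z_1‖ > x_n, ‖Z_{1+j}‖ > x_n)`. Since
`a_n → ∞`, regular variation keeps `n P(‖Z_1‖ > x_n)` bounded, so each term tends to `0`
by pairwise asymptotic independence.
-/

open Topology Finset

lemma tendsto_zero_of_forall_le_add {ι : Type*} {l : Filter ι} {f : ι → ℝ} (hf : ∀ i, 0 ≤ f i)
    (h : ∀ ε > 0, ∃ g : ι → ℝ, Tendsto g l (𝓝 0) ∧ ∀ i, f i ≤ ε + g i) :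
    Tendsto f l (𝓝 0) := by
  rw [Metric.tendsto_nhds]
  intro ε hε
  obtain ⟨g, hg, hfg⟩ := h (ε / 2) (half_pos hε)
  filter_upwards [hg.eventually (gt_mem_nhds (half_pos hε))] with i hi
  rw [Real.dist_0_eq_abs, abs_of_nonneg (hf i)]
  linarith [hfg i]

lemma tendsto_zero_of_tendsto_natCast_mul {f : ℕ → ℝ} {K : ℝ}
    (h : Tendsto (fun n : ℕ => (n : ℝ) * f n) atTop (𝓝 K)) : Tendsto f atTop (𝓝 0) := by
  refine (h.div_atTop tendsto_natCast_atTop_atTop).congr' ?_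
  filter_upwards [eventually_ne_atTop 0] with n hn
  field_simp

lemma tendsto_atTop_of_antitone_of_tendsto_zero {ι : Type*} {l : Filter ι} {F : ℝ → ℝ}
    (hF : Antitone F) (hpos : ∀ x, 0 < x → 0 < F x) {a : ι → ℝ}
    (h : Tendsto (fun i => F (a i)) l (𝓝 0)) : Tendsto a l atTop := by
  refine tendsto_atTop.2 fun M => ?_
  have hM : 0 < max M 1 := lt_max_of_lt_right one_pos
  filter_upwards [h.eventually (gt_mem_nhds (hpos _ hM))] with i hi
  by_contra! hlt
  linarith [hF (hlt.le.trans (le_max_left M 1))]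

lemma tendsto_natCast_mul_comp_mul_of_ratio {p q : ℝ → ℝ} {a : ℕ → ℝ} {u L K : ℝ}
    (hq : ∀ x, 0 < x → q x ≠ 0) (ha : Tendsto a atTop atTop) (hu : 0 < u)
    (hpq : Tendsto (fun x => p x / q x) atTop (𝓝 0))
    (hreg : Tendsto (fun x => q (u * x) / q x) atTop (𝓝 L))
    (hlim : Tendsto (fun n : ℕ => n * q (a n)) atTop (𝓝 K)) :
    Tendsto (fun n : ℕ => n * p (u * a n)) atTop (𝓝 0) := by
  have h := ((hpq.comp (ha.const_mul_atTop hu)).mul (hreg.comp ha)).mul hlim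
  rw [zero_mul, zero_mul] at h
  refine h.congr' ?_
  filter_upwards [ha.eventually_gt_atTop 0] with n hn
  have := hq _ (mul_pos hu hn)
  have := hq _ hn
  simp only [Function.comp_apply]
  field_simp

section Tails

variable {Ω : Type*} [MeasurableSpace Ω] (P : Measure Ω) [IsFiniteMeasure P]

lemma antitone_toReal_measure_lt (X : Ω → ℝ) : Antitone fun x => (P {ω | x < X ω}).toReal :=
  fun _ _ hxy =>
    ENNReal.toReal_mono (measure_ne_top _ _) (measure_mono fun _ hω => hxy.trans_lt hω)

lemma tendsto_measure_lt_atTop_zero {D : Ω → ℝ} (hD : Measurable D) :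
    Tendsto (fun s : ℝ => P {ω | s < D ω}) atTop (𝓝 0) := by
  have h := tendsto_measure_iInter_atTop (μ := P) (s := fun s : ℝ => {ω | s < D ω})
    (fun _ => (measurableSet_lt measurable_const hD).nullMeasurableSet)
    (fun _ _ hst _ hω => hst.trans_lt hω) ⟨0, measure_ne_top _ _⟩
  have hempty : (⋂ s : ℝ, {ω | s < D ω}) = ∅ :=
    Set.eq_empty_of_forall_notMem fun ω hω => lt_irrefl (D ω) (Set.mem_iInter.1 hω (D ω))
  rwa [hempty, measure_empty] at h

end Tails

def nearPairEvent {Ω : Type*} (p : ℤ → Ω → Prop) (n m : ℕ) : Set Ω :=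
  {ω | ∃ k ∈ Icc (1 : ℤ) n, ∃ l ∈ Icc (k - m) (k + m), l ≠ k ∧ p k ω ∧ p l ω}

lemma nearPairEvent_subset_union {Ω E : Type*} [SeminormedAddCommGroup E] {Z : ℤ → Ω → E}
    {D : Ω → ℝ} {c s t : ℝ} (hs : 0 < s) (n m : ℕ) :
    nearPairEvent (fun k ω => c * t < D ω * ‖Z k ω‖) n m ⊆
      {ω | s < D ω} ∪ nearPairEvent (fun k ω => Z k ω ∈ {z : E | c / s * t < ‖z‖}) n m := by
  rintro ω ⟨k, hk, l, hl, hne, hkD, hlD⟩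
  by_cases hD : s < D ω
  · exact Or.inl hD
  have key : ∀ y : ℝ, 0 ≤ y → c * t < D ω * y → c / s * t < y := fun y hy h => by
    rw [div_mul_eq_mul_div, div_lt_iff₀ hs]
    linarith [mul_le_mul_of_nonneg_right (not_lt.1 hD) hy]
  exact Or.inr ⟨k, hk, l, hl, hne, key _ (norm_nonneg _) hkD, key _ (norm_nonneg _) hlD⟩

namespace StrictlyStationary

variable {Ω E : Type*} [MeasurableSpace Ω] [MeasurableSpace E] {P : Measure Ω}
  {Z : ℤ → Ω → E}

lemma measure_pair_shift (hstat : StrictlyStationary P Z) (hZ : ∀ i, Measurable (Z i))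
    {A B : Set E} (hA : MeasurableSet A) (hB : MeasurableSet B) (b : ℤ) (j : ℕ) :
    P {ω | Z b ω ∈ A ∧ Z (b + j) ω ∈ B} = P {ω | Z 1 ω ∈ A ∧ Z (1 + j) ω ∈ B} := by
  let T : Set (Fin (j + 1) → E) := {v | v 0 ∈ A ∧ v (Fin.last j) ∈ B}
  have hT : MeasurableSet T := (measurable_pi_apply 0 hA).inter (measurable_pi_apply _ hB)
  have key := congrArg (· T) (hstat (j + 1) (b - 1))
  rw [Measure.map_apply (measurable_pi_lambda _ fun _ => hZ _) hT,
    Measure.map_apply (measurable_pi_lambda _ fun _ => hZ _) hT] at key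
  convert key using 2 <;> ext ω <;> simp [T, show (1 : ℤ) + j + (b - 1) = b + j by ring]

lemma measure_pair_eq (hstat : StrictlyStationary P Z) (hZ : ∀ i, Measurable (Z i))
    {A : Set E} (hA : MeasurableSet A) (k l : ℤ) :
    P {ω | Z k ω ∈ A ∧ Z l ω ∈ A} = P {ω | Z 1 ω ∈ A ∧ Z (1 + (l - k).natAbs) ω ∈ A} := by
  rcases le_total k l with hkl | hlk
  · have hl : l = k + (l - k).natAbs := by omega
    conv_lhs => rw [hl]
    exact hstat.measure_pair_shift hZ hA hA k _
  · have hk : k = l + (l - k).natAbs := by omega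
    calc P {ω | Z k ω ∈ A ∧ Z l ω ∈ A}
        = P {ω | Z l ω ∈ A ∧ Z (l + (l - k).natAbs) ω ∈ A} := by
          rw [← hk]
          simp only [and_comm]
      _ = _ := hstat.measure_pair_shift hZ hA hA l _

lemma measure_nearPairEvent_le (hstat : StrictlyStationary P Z) (hZ : ∀ i, Measurable (Z i))
    {A : Set E} (hA : MeasurableSet A) (n m : ℕ) :
    P (nearPairEvent (fun k ω => Z k ω ∈ A) n m) ≤
      (2 * n * m : ℕ) * ∑ j ∈ Icc 1 m, P {ω | Z 1 ω ∈ A ∧ Z (1 + j) ω ∈ A} := by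
  set S := ∑ j ∈ Icc 1 m, P {ω | Z 1 ω ∈ A ∧ Z (1 + j) ω ∈ A}
  have hpair : ∀ k : ℤ, ∀ l ∈ (Icc (k - m) (k + m)).erase k,
      P {ω | Z k ω ∈ A ∧ Z l ω ∈ A} ≤ S := by
    intro k l hl
    rw [mem_erase, mem_Icc] at hl
    rw [hstat.measure_pair_eq hZ hA]
    exact single_le_sum (f := fun j : ℕ => P {ω | Z 1 ω ∈ A ∧ Z (1 + j) ω ∈ A})
      (fun _ _ => zero_le) (mem_Icc.2 (by omega))
  have hcard : ∀ k : ℤ, #((Icc (k - m) (k + m)).erase k) = 2 * m := by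
    intro k
    rw [card_erase_of_mem (mem_Icc.2 (by omega)), Int.card_Icc]
    omega
  calc P (nearPairEvent (fun k ω => Z k ω ∈ A) n m)
      ≤ P (⋃ k ∈ Icc (1 : ℤ) n, ⋃ l ∈ (Icc (k - m) (k + m)).erase k,
          {ω | Z k ω ∈ A ∧ Z l ω ∈ A}) := by
        refine measure_mono fun ω ⟨k, hk, l, hl, hne, hkA, hlA⟩ => ?_
        simp only [Set.mem_iUnion]
        exact ⟨k, hk, l, mem_erase.2 ⟨hne, hl⟩, hkA, hlA⟩
    _ ≤ ∑ k ∈ Icc (1 : ℤ) n, ∑ l ∈ (Icc (k - m) (k + m)).erase k,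
          P {ω | Z k ω ∈ A ∧ Z l ω ∈ A} :=
        (measure_biUnion_finset_le _ _).trans (sum_le_sum fun _ _ => measure_biUnion_finset_le _ _)
    _ ≤ ∑ k ∈ Icc (1 : ℤ) n, ∑ l ∈ (Icc (k - m) (k + m)).erase k, S :=
        sum_le_sum fun k _ => sum_le_sum (hpair k)
    _ = (2 * n * m : ℕ) * S := by
        simp only [sum_const, hcard, Int.card_Icc, add_sub_cancel_right, Int.toNat_natCast,
          nsmul_eq_mul]
        push_cast
        ring

lemma toReal_measure_nearPairEvent_mul_le [SeminormedAddCommGroup E] [OpensMeasurableSpace E]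
    [IsFiniteMeasure P] (hstat : StrictlyStationary P Z) (hZ : ∀ i, Measurable (Z i))
    (D : Ω → ℝ) {c s t : ℝ} (hs : 0 < s) (n m : ℕ) :
    (P (nearPairEvent (fun k ω => c * t < D ω * ‖Z k ω‖) n m)).toReal ≤
      (P {ω | s < D ω}).toReal + 2 * m *
        ∑ j ∈ Icc 1 m, n * (P {ω | c / s * t < ‖Z 1 ω‖ ∧ c / s * t < ‖Z (1 + j) ω‖}).toReal := by
  have hA : MeasurableSet {z : E | c / s * t < ‖z‖} :=
    measurableSet_lt measurable_const continuous_norm.measurable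
  have h := (measure_mono (nearPairEvent_subset_union (Z := Z) (D := D) hs n m)).trans
    ((measure_union_le _ _).trans (add_le_add le_rfl (hstat.measure_nearPairEvent_le hZ hA n m)))
  have hfin : ∀ j : ℕ, P {ω | c / s * t < ‖Z 1 ω‖ ∧ c / s * t < ‖Z (1 + j) ω‖} ≠ ⊤ :=
    fun _ => measure_ne_top _ _
  have hsum := ENNReal.mul_ne_top (ENNReal.natCast_ne_top (2 * n * m))
    (ENNReal.sum_ne_top.2 fun j (_ : j ∈ Icc 1 m) => hfin j)
  refine (ENNReal.toReal_mono (ENNReal.add_ne_top.2 ⟨measure_ne_top _ _, hsum⟩) h).trans_eq ?_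
  rw [ENNReal.toReal_add (measure_ne_top _ _) hsum, ENNReal.toReal_mul, ENNReal.toReal_natCast,
    ENNReal.toReal_sum fun j _ => hfin j, ← mul_sum]
  push_cast
  ring

end StrictlyStationary

theorem stmt14_general {Ω : Type*} [MeasurableSpace Ω] (P : Measure Ω) [IsProbabilityMeasure P]
    {d : ℕ} (Z : ℤ → Ω → (Fin d → ℝ)) (hZmeas : ∀ i, Measurable (Z i))
    (hstat : StrictlyStationary P Z)
    {α : ℝ} (hrv : RegVaryingNorm P (Z 1) α)
    (hpai : ∀ i j : ℤ, i ≠ j →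
      Tendsto (fun x : ℝ =>
          (P {ω | x < ‖Z i ω‖ ∧ x < ‖Z j ω‖}).toReal / (P {ω | x < ‖Z 1 ω‖}).toReal)
        atTop (nhds 0))
    (a : ℕ → ℝ)
    (hlim : Tendsto (fun n : ℕ => (n : ℝ) * (P {ω | a n < ‖Z 1 ω‖}).toReal) atTop (nhds 1))
    (D : Ω → ℝ) (hDmeas : Measurable D) :
    ∀ m : ℕ, 1 ≤ m → ∀ c : ℝ, 0 < c →
      Tendsto (fun n : ℕ =>
          (P {ω | ∃ k ∈ Finset.Icc (1 : ℤ) (n : ℤ),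
              ∃ l ∈ Finset.Icc (k - (m : ℤ)) (k + (m : ℤ)), l ≠ k ∧
              c * a n < D ω * ‖Z k ω‖ ∧ c * a n < D ω * ‖Z l ω‖}).toReal)
        atTop (nhds 0) := by
  intro m _ c hc
  have ha_top : Tendsto a atTop atTop :=
    tendsto_atTop_of_antitone_of_tendsto_zero (antitone_toReal_measure_lt P _) hrv.1
      (tendsto_zero_of_tendsto_natCast_mul hlim)
  refine tendsto_zero_of_forall_le_add (fun n => ENNReal.toReal_nonneg) fun ε hε => ?_
  obtain ⟨s, hsD, hs⟩ := ((((ENNReal.tendsto_toReal ENNReal.zero_ne_top).comp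
    (tendsto_measure_lt_atTop_zero P hDmeas)).eventually (gt_mem_nhds hε)).and
    (eventually_gt_atTop 0)).exists
  refine ⟨_, ?_, fun n => (hstat.toReal_measure_nearPairEvent_mul_le hZmeas D hs n m).trans
    (add_le_add hsD.le le_rfl)⟩
  have hpair : ∀ j ∈ Icc 1 m, Tendsto (fun n : ℕ => n *
      (P {ω | c / s * a n < ‖Z 1 ω‖ ∧ c / s * a n < ‖Z (1 + j) ω‖}).toReal) atTop (𝓝 0) :=
    fun j hj => tendsto_natCast_mul_comp_mul_of_ratio (fun x hx => (hrv.1 x hx).ne') ha_top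
      (div_pos hc hs) (hpai 1 (1 + j) (by simp at hj; omega)) (hrv.2 _ (div_pos hc hs)) hlim
  simpa using (tendsto_finsetSum _ hpair).const_mul (2 * m : ℝ)

/-- For a pairwise asymptotically independent stationary regularly varying sequence and `D`
nonnegative independent of `(Z_i)`, the probability that two distinct nearby indices
`k, l` with `|l − k| ≤ m` both satisfy `D‖Z‖ > c a_n` tends to `0`. -/
theorem stmt14 {Ω : Type*} [MeasurableSpace Ω] (P : Measure Ω) [IsProbabilityMeasure P]
    {d : ℕ} (Z : ℤ → Ω → (Fin d → ℝ)) (hZmeas : ∀ i, Measurable (Z i))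
    (hstat : StrictlyStationary P Z)
    {α : ℝ} (hα : 0 < α) (hrv : RegVaryingNorm P (Z 1) α)
    (hpai : ∀ i j : ℤ, i ≠ j →
      Tendsto (fun x : ℝ =>
          (P {ω | x < ‖Z i ω‖ ∧ x < ‖Z j ω‖}).toReal / (P {ω | x < ‖Z 1 ω‖}).toReal)
        atTop (nhds 0))
    (a : ℕ → ℝ) (ha : ∀ n, 0 < a n)
    (hlim : Tendsto (fun n : ℕ => (n : ℝ) * (P {ω | a n < ‖Z 1 ω‖}).toReal) atTop (nhds 1))
    (D : Ω → ℝ) (hDmeas : Measurable D) (hD0 : ∀ᵐ ω ∂P, 0 ≤ D ω)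
    (hindep : ProbabilityTheory.Indep
      (MeasurableSpace.comap D inferInstance)
      (⨆ i : ℤ, MeasurableSpace.comap (Z i) inferInstance) P) :
    ∀ m : ℕ, 1 ≤ m → ∀ c : ℝ, 0 < c →
      Tendsto (fun n : ℕ =>
          (P {ω | ∃ k ∈ Finset.Icc (1 : ℤ) (n : ℤ),
              ∃ l ∈ Finset.Icc (k - (m : ℤ)) (k + (m : ℤ)), l ≠ k ∧
              c * a n < D ω * ‖Z k ω‖ ∧ c * a n < D ω * ‖Z l ω‖}).toReal)
        atTop (nhds 0) :=
  stmt14_general P Z hZmeas hstat hrv hpai a hlim D hDmeas
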